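/- Let L = {i_1 < i_2 < … < i_ν} ⊆ {2, …, k} and let S_L = { q ∈ C^k(m) : for every 2 ≤ i ≤ k, A_{i−1}(q) = 0 if and only if i ∈ L }. Then the subset U of S_L consisting of those q = (x_0, …, x_k) such that ⟨x_{i_λ+1} − x_{i_λ}, x_{i_λ} − x_{i_λ−2}⟩ ≠ 0 for every λ with i_λ + 1 ≤ k and i_λ + 1 ∉ L, is open and dense in S_L (with the subspace topology). (This expresses that the RVT class with no tangency letters, C_{R^{h_0} V R^{h_1} ⋯ V R^{h_ν}}, is an open dense subset of the EKR class Σ_{j_1⋯j_k} of depth 1 determined by L.) -/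

import Mathlib

/-!
Each condition `⟪x_{i+1} - x_i, x_i - x_{i-2}⟫ ≠ 0` cuts out an open subset of `S_L`, so it
suffices to show that each of them is dense, finite intersections of open dense sets being
dense. Write `s, v, w` for the segments `i - 2, i - 1, i` of a configuration `q ∈ S_L`. Since
`i ∈ L` and `i + 1 ∉ L` we have `⟪v, s⟫ = 0` and `⟪w, v⟫ ≠ 0`, and the quantity in question is
`⟪w, v + s⟫`. Rotating `v` towards a unit vector `u ⊥ s, v` (which exists as `m + 1 ≥ 3`) and
translating the rest of the arm keeps `⟪v, s⟫ = 0`, keeps `⟪w, v⟫ ≠ 0` for small angles and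
changes no other `A_j`, so the configuration stays in `S_L`; with the right orientation of `u`
the value of `⟪w, v⟫`, hence of `⟪w, v + s⟫`, changes for every small positive angle.
-/

noncomputable section

open scoped RealInnerProductSpace

open Fin.NatCast

namespace ArticulatedArm

/-- `ℝ^{m+1}` with the Euclidean structure. -/
abbrev Vec (m : ℕ) : Type := EuclideanSpace ℝ (Fin (m + 1))

/-- `(ℝ^{m+1})^{k+1}` with the Euclidean (product) structure. -/
abbrev Tup (m k : ℕ) : Type := PiLp 2 (fun _ : Fin (k + 1) => Vec m)

/-- The segment vector `x_{i+1} - x_i`. -/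
def seg (m k : ℕ) (x : Tup m k) (i : ℕ) : Vec m :=
  x ((i + 1 : ℕ) : Fin (k + 1)) - x ((i : ℕ) : Fin (k + 1))

/-- The configuration space `C^k(m)`. -/
def Conf (m k : ℕ) : Set (Tup m k) := {x | ∀ i, i < k → ‖seg m k x i‖ = 1}

/-- `A_{i,j}(x) = ⟨x_{i+1} - x_i, x_{j+1} - x_j⟩`. -/
def AA (m k : ℕ) (x : Tup m k) (i j : ℕ) : ℝ := ⟪seg m k x i, seg m k x j⟫

/-- `A_i(x) = A_{i,i-1}(x)`. -/
def Acoef (m k : ℕ) (x : Tup m k) (i : ℕ) : ℝ := AA m k x i (i - 1)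

/-- `Z_i(x)`: the tuple whose `i`-th component is `x_{i+1} - x_i` and the others `0`. -/
def Zt (m k : ℕ) (x : Tup m k) (i : ℕ) : Tup m k :=
  WithLp.toLp 2 fun l => if (l : ℕ) = i then seg m k x i else 0

/-- `N_i(x)`: the tuple with `i`-th component `-(x_{i+1} - x_i)`, `(i+1)`-th component
`x_{i+1} - x_i`, and the others `0`. -/
def Nt (m k : ℕ) (x : Tup m k) (i : ℕ) : Tup m k :=
  WithLp.toLp 2 fun l => if (l : ℕ) = i then -(seg m k x i)
    else if (l : ℕ) = i + 1 then seg m k x i else 0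

/-- `Y_n(x) = Σ_{i=0}^{n-1} (Π_{j=i+1}^{n-1} A_j(x)) Z_i(x)`. -/
def Yt (m k : ℕ) (x : Tup m k) (n : ℕ) : Tup m k :=
  ∑ i ∈ Finset.range n, (∏ j ∈ Finset.Ico (i + 1) n, Acoef m k x j) • Zt m k x i

/-- `Ψ_i(x) = ‖x_{i+1} - x_i‖² - 1`. -/
def Psi (m k : ℕ) (i : ℕ) (x : Tup m k) : ℝ := ‖seg m k x i‖ ^ 2 - 1

/-- `e_r^{(i)}`: the tuple whose `i`-th component is the `r`-th standard basis
vector of `ℝ^{m+1}` and whose other components are `0`. -/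
def et (m k : ℕ) (i : ℕ) (r : Fin (m + 1)) : Tup m k :=
  WithLp.toLp 2 fun l => if (l : ℕ) = i then EuclideanSpace.single r (1 : ℝ) else 0

open Module Filter Topology Real

theorem dense_biInter_finset_of_isOpen {X ι : Type*} [TopologicalSpace X] (s : Finset ι)
    {f : ι → Set X} (ho : ∀ i ∈ s, IsOpen (f i)) (hd : ∀ i ∈ s, Dense (f i)) :
    Dense (⋂ i ∈ s, f i) := by
  classical
  induction s using Finset.induction_on with
  | empty => simp
  | insert a s _ ih =>
    rw [Finset.set_biInter_insert]
    simp only [Finset.mem_insert, forall_eq_or_imp] at ho hd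
    exact hd.1.inter_of_isOpen_left (ih ho.2 hd.2) ho.1

theorem exists_norm_eq_one_inner_eq_zero {E : Type*} [NormedAddCommGroup E]
    [InnerProductSpace ℝ E] [FiniteDimensional ℝ E] (hE : 3 ≤ finrank ℝ E) (s v : E) :
    ∃ u : E, ‖u‖ = 1 ∧ ⟪u, s⟫ = 0 ∧ ⟪u, v⟫ = 0 := by
  set K := Submodule.span ℝ (Set.range ![s, v])
  have hK : finrank ℝ K ≤ 2 := (finrank_range_le_card _).trans (by simp)
  have hKo : Kᗮ ≠ ⊥ := by
    intro h
    have := K.finrank_add_finrank_orthogonal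
    rw [h, finrank_bot] at this
    omega
  obtain ⟨u, huK, hu⟩ := Submodule.exists_mem_ne_zero_of_ne_bot hKo
  have horth : ∀ x ∈ K, ⟪u, x⟫ = 0 := (K.mem_orthogonal' u).mp huK
  refine ⟨‖u‖⁻¹ • u, norm_smul_inv_norm hu, ?_, ?_⟩ <;>
    rw [real_inner_smul_left, horth _ (Submodule.subset_span (by simp)), mul_zero]

theorem norm_cos_smul_add_sin_smul {E : Type*} [NormedAddCommGroup E]
    [InnerProductSpace ℝ E] {v u : E} (hv : ‖v‖ = 1) (hu : ‖u‖ = 1) (hvu : ⟪v, u⟫ = 0)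
    (t : ℝ) : ‖cos t • v + sin t • u‖ = 1 := by
  rw [← pow_left_inj₀ (norm_nonneg _) zero_le_one two_ne_zero, norm_add_sq_real, norm_smul,
    norm_smul, real_inner_smul_left, real_inner_smul_right, hvu, hv, hu]
  simp [cos_sq_add_sin_sq]

theorem eventually_cos_add_sin_ne {a b : ℝ} (ha : a ≠ 0) (hab : a * b ≤ 0) :
    ∀ᶠ t in 𝓝[>] 0, a * cos t + b * sin t ≠ 0 ∧ a * cos t + b * sin t ≠ a := by
  have hcont : Tendsto (fun t => a * cos t + b * sin t) (𝓝 0) (𝓝 a) := by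
    simpa using (by fun_prop : Continuous fun t => a * cos t + b * sin t).tendsto 0
  refine ((hcont.eventually_ne ha).filter_mono nhdsWithin_le_nhds).and ?_
  filter_upwards [Ioo_mem_nhdsGT pi_pos] with t ⟨ht0, htπ⟩ h
  have hcos : cos t < 1 := by simpa using cos_lt_cos_of_nonneg_of_le_pi le_rfl htπ.le ht0
  have hsin := sin_pos_of_pos_of_lt_pi ht0 htπ
  have key : a ^ 2 * (cos t - 1) + a * b * sin t = 0 := by linear_combination a * h
  have ha2 : 0 < a ^ 2 := by positivity
  linarith [mul_nonpos_of_nonpos_of_nonneg hab hsin.le, mul_pos ha2 (sub_pos.mpr hcos)]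

-- the set `S_L`
def Stratum (m k : ℕ) (L : Finset ℕ) : Set (Tup m k) :=
  {q | q ∈ Conf m k ∧ ∀ i, 2 ≤ i → i ≤ k → (Acoef m k q (i - 1) = 0 ↔ i ∈ L)}

def Bcoef (m k i : ℕ) (x : Tup m k) : ℝ :=
  ⟪x ((i + 1 : ℕ) : Fin (k + 1)) - x ((i : ℕ) : Fin (k + 1)),
    x ((i : ℕ) : Fin (k + 1)) - x ((i - 2 : ℕ) : Fin (k + 1))⟫

theorem continuous_Bcoef (m k i : ℕ) : Continuous (Bcoef m k i) := by
  unfold Bcoef; fun_prop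

theorem Bcoef_eq_inner_seg {m k i : ℕ} (hi : 2 ≤ i) (x : Tup m k) :
    Bcoef m k i x = ⟪seg m k x i, seg m k x (i - 1) + seg m k x (i - 2)⟫ := by
  rw [Bcoef, seg, seg, seg, Nat.sub_add_cancel (by omega : 1 ≤ i),
    show i - 2 + 1 = i - 1 by omega]
  congr 1
  abel

def setSeg {m k : ℕ} (q : Tup m k) (j : ℕ) (v : Vec m) : Tup m k :=
  WithLp.toLp 2 fun l => if j < (l : ℕ) then q l + (v - seg m k q j) else q l

theorem continuous_setSeg {m k : ℕ} (q : Tup m k) (j : ℕ) : Continuous (setSeg q j) := by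
  refine (PiLp.continuous_toLp 2 _).comp (continuous_pi fun l => ?_)
  split_ifs <;> fun_prop

theorem setSeg_seg_self {m k : ℕ} (q : Tup m k) (j : ℕ) : setSeg q j (seg m k q j) = q := by
  ext l : 1
  simp [setSeg]

theorem seg_setSeg {m k : ℕ} (q : Tup m k) (j : ℕ) (v : Vec m) {l : ℕ} (hl : l < k) :
    seg m k (setSeg q j v) l = if l = j then v else seg m k q l := by
  have h1 : (((l + 1 : ℕ) : Fin (k + 1)) : ℕ) = l + 1 := Fin.val_cast_of_lt (by omega)
  have h0 : (((l : ℕ) : Fin (k + 1)) : ℕ) = l := Fin.val_cast_of_lt (by omega)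
  simp only [seg, setSeg, PiLp.toLp_apply, h0, h1]
  split_ifs <;> (try subst_vars) <;> first | omega | abel1

theorem Bcoef_setSeg {m k i : ℕ} (hi : 2 ≤ i) (hik : i + 1 ≤ k) (q : Tup m k) (v : Vec m) :
    Bcoef m k i (setSeg q (i - 1) v) = ⟪seg m k q i, v + seg m k q (i - 2)⟫ := by
  rw [Bcoef_eq_inner_seg hi, seg_setSeg _ _ _ (by omega), seg_setSeg _ _ _ (by omega),
    seg_setSeg _ _ _ (by omega), if_neg (by omega), if_pos rfl, if_neg (by omega)]

theorem setSeg_mem_stratum {m k : ℕ} {L : Finset ℕ} {q : Tup m k} (hq : q ∈ Stratum m k L)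
    {i : ℕ} (hi : 2 ≤ i) (hik : i + 1 ≤ k) (hiL : i ∈ L) (hi1 : i + 1 ∉ L) {v : Vec m}
    (hv : ‖v‖ = 1) (hvs : ⟪v, seg m k q (i - 2)⟫ = 0) (hwv : ⟪seg m k q i, v⟫ ≠ 0) :
    setSeg q (i - 1) v ∈ Stratum m k L := by
  obtain ⟨hconf, hA⟩ := hq
  refine ⟨fun j hj => ?_, fun j hj2 hjk => ?_⟩
  · rw [seg_setSeg q _ v hj]
    split_ifs
    exacts [hv, hconf j hj]
  rw [Acoef, AA, seg_setSeg _ _ _ (by omega), seg_setSeg _ _ _ (by omega)]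
  rcases (by omega : j = i ∨ j = i + 1 ∨ (j - 1 ≠ i - 1 ∧ j - 1 - 1 ≠ i - 1))
    with rfl | rfl | ⟨h1, h2⟩
  · rw [if_pos rfl, if_neg (by omega), show j - 1 - 1 = j - 2 by omega]
    simpa [hiL] using hvs
  · rw [if_neg (by omega), if_pos (by omega), Nat.add_sub_cancel]
    simpa [hi1] using hwv
  · rw [if_neg h1, if_neg h2]
    exact hA j hj2 hjk

theorem inner_seg_of_mem_stratum {m k : ℕ} {L : Finset ℕ} {q : Tup m k}
    (hq : q ∈ Stratum m k L) {i : ℕ} (hi : 2 ≤ i) (hiL : i ∈ L) (hik : i + 1 ≤ k)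
    (hi1 : i + 1 ∉ L) :
    ⟪seg m k q (i - 1), seg m k q (i - 2)⟫ = 0 ∧ ⟪seg m k q i, seg m k q (i - 1)⟫ ≠ 0 := by
  refine ⟨?_, fun h => hi1 ((hq.2 (i + 1) (by omega) hik).1 (by simpa [Acoef, AA]))⟩
  simpa [Acoef, AA, show i - 1 - 1 = i - 2 by omega] using (hq.2 i hi (by omega)).2 hiL

theorem dense_setOf_Bcoef_ne_zero {m k : ℕ} (hm : 2 ≤ m) {L : Finset ℕ}
    (hL : ↑L ⊆ Set.Icc 2 k) {i : ℕ} (hiL : i ∈ L) (hik : i + 1 ≤ k) (hi1 : i + 1 ∉ L) :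
    Dense {q : Stratum m k L | Bcoef m k i q ≠ 0} := by
  intro q
  rw [closure_subtype]
  by_cases hB : Bcoef m k i q ≠ 0
  · exact subset_closure ⟨q, hB, rfl⟩
  have hi : 2 ≤ i := (hL hiL).1
  set s := seg m k q (i - 2)
  set v := seg m k q (i - 1)
  set w := seg m k q i
  obtain ⟨hvs, hwv⟩ := inner_seg_of_mem_stratum q.2 hi hiL hik hi1
  -- this orientation makes `⟪w, cos t • v + sin t • u⟫` move away from `⟪w, v⟫` as `t` leaves `0`
  obtain ⟨u, hu, hus, huv, hsign⟩ :
      ∃ u : Vec m, ‖u‖ = 1 ∧ ⟪u, s⟫ = 0 ∧ ⟪u, v⟫ = 0 ∧ ⟪w, v⟫ * ⟪w, u⟫ ≤ 0 := by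
    obtain ⟨u, hu, hus, huv⟩ := exists_norm_eq_one_inner_eq_zero (by simp; omega) s v
    rcases le_total (⟪w, v⟫ * ⟪w, u⟫) 0 with h | h
    · exact ⟨u, hu, hus, huv, h⟩
    · exact ⟨-u, by simpa, by simpa, by simpa, by simpa⟩
  let γ : ℝ → Tup m k := fun t => setSeg q (i - 1) (cos t • v + sin t • u)
  refine mem_closure_of_tendsto (b := 𝓝[>] 0) (f := γ) ?_ ?_
  · have hγ : γ 0 = q := by simp [γ, v, setSeg_seg_self]
    rw [← hγ]
    exact ((continuous_setSeg (q : Tup m k) _).comp (by fun_prop)).continuousAt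
      |>.continuousWithinAt.tendsto
  filter_upwards [eventually_cos_add_sin_ne hwv hsign] with t ⟨hne0, hnea⟩
  have hinner : ⟪w, cos t • v + sin t • u⟫ = ⟪w, v⟫ * cos t + ⟪w, u⟫ * sin t := by
    rw [inner_add_right, real_inner_smul_right, real_inner_smul_right]
    ring
  have hvt : ⟪cos t • v + sin t • u, s⟫ = 0 := by
    rw [inner_add_left, real_inner_smul_left, real_inner_smul_left, hvs, hus]
    ring
  have hvu : ⟪v, u⟫ = 0 := by rwa [real_inner_comm]
  refine ⟨⟨γ t, setSeg_mem_stratum q.2 hi hik hiL hi1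
    (norm_cos_smul_add_sin_smul (q.2.1 (i - 1) (by omega)) hu hvu t) hvt
    (hinner ▸ hne0)⟩, ?_, rfl⟩
  have hws : ⟪w, v + s⟫ = 0 := by simpa [Bcoef_eq_inner_seg hi] using hB
  change Bcoef m k i (γ t) ≠ 0
  rw [Bcoef_setSeg hi hik, inner_add_right, hinner]
  rw [inner_add_right] at hws
  intro h
  exact hnea (by linarith)

theorem statement17_general (m k : ℕ) (hm : 2 ≤ m)
    (L : Finset ℕ) (hL : ↑L ⊆ Set.Icc 2 k) :
    let SL : Set (Tup m k) :=
      {q | q ∈ Conf m k ∧ ∀ i, 2 ≤ i → i ≤ k → (Acoef m k q (i - 1) = 0 ↔ i ∈ L)}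
    let U : Set ↥SL := {q | ∀ i ∈ L, i + 1 ≤ k → (i + 1) ∉ L →
      ⟪(q : Tup m k) ((i + 1 : ℕ) : Fin (k + 1)) - (q : Tup m k) ((i : ℕ) : Fin (k + 1)),
        (q : Tup m k) ((i : ℕ) : Fin (k + 1)) -
          (q : Tup m k) ((i - 2 : ℕ) : Fin (k + 1))⟫ ≠ 0}
    IsOpen U ∧ Dense U := by
  intro SL U
  have hU : U = ⋂ i ∈ L.filter (fun i => i + 1 ≤ k ∧ i + 1 ∉ L),
      {q : SL | Bcoef m k i q ≠ 0} := by
    ext q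
    simp only [U, Bcoef, Set.mem_iInter, Finset.mem_filter, Set.mem_ofPred_eq, and_imp]
  rw [hU]
  have hopen : ∀ i, IsOpen {q : SL | Bcoef m k i q ≠ 0} := fun i =>
    isOpen_ne_fun ((continuous_Bcoef m k i).comp continuous_subtype_val) continuous_const
  refine ⟨isOpen_biInter_finset fun i _ => hopen i,
    dense_biInter_finset_of_isOpen _ (fun i _ => hopen i) fun i hi => ?_⟩
  obtain ⟨hiL, hik, hi1⟩ := Finset.mem_filter.1 hi
  exact dense_setOf_Bcoef_ne_zero hm hL hiL hik hi1

/-- for `L ⊆ {2,…,k}`, inside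
`S_L = {q ∈ C^k(m) : A_{i-1}(q) = 0 ↔ i ∈ L, for 2 ≤ i ≤ k}`, the subset of configurations
with `⟨x_{i+1} - x_i, x_i - x_{i-2}⟩ ≠ 0` for every `i ∈ L` with `i + 1 ≤ k` and `i + 1 ∉ L`
is open and dense in `S_L`. -/
theorem statement17 (m k : ℕ) (hm : 2 ≤ m) (hk : 2 ≤ k)
    (L : Finset ℕ) (hL : ↑L ⊆ Set.Icc 2 k) :
    let SL : Set (Tup m k) :=
      {q | q ∈ Conf m k ∧ ∀ i, 2 ≤ i → i ≤ k → (Acoef m k q (i - 1) = 0 ↔ i ∈ L)}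
    let U : Set ↥SL := {q | ∀ i ∈ L, i + 1 ≤ k → (i + 1) ∉ L →
      ⟪(q : Tup m k) ((i + 1 : ℕ) : Fin (k + 1)) - (q : Tup m k) ((i : ℕ) : Fin (k + 1)),
        (q : Tup m k) ((i : ℕ) : Fin (k + 1)) -
          (q : Tup m k) ((i - 2 : ℕ) : Fin (k + 1))⟫ ≠ 0}
    IsOpen U ∧ Dense U :=
  statement17_general m k hm L hL

end ArticulatedArm
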